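/- The generating identity ∏_{i=1}^{n}(u ⊕ x_i) = u^n + (1 + βu)·Σ_{r=1}^{n} u^{n-r}·G_{1^r}(x₁,…,xₙ) holds, where u ⊕ x = u + x + βux and G_{1^r} is the ordinary Grothendieck polynomial for a single column of length r. -/

import Mathlib

open Finset

/-- The ordinary Grothendieck polynomial `G_θ(x)` defined by the determinant
quotient `det[x_j^{θ_i+n-i}(1+βx_j)^{i-1}] / det[x_j^{n-i}]`. -/
noncomputable def grothDet5 {K : Type*} [Field K] {n : ℕ} (β : K) (x : Fin n → K)
    (θ : Fin n → ℕ) : K :=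
  Matrix.det (Matrix.of fun i j : Fin n =>
      x j ^ (θ i + (n - 1 - i.val)) * (1 + β * x j) ^ i.val)
    / Matrix.det (Matrix.of fun i j : Fin n => x j ^ (n - 1 - i.val))

namespace ColGroth

variable {K : Type*} [Field K] {n : ℕ}

/-- The basic row family: `arow β x k = x^(n-k) (1+βx)^k`. -/
noncomputable def arow (β : K) (x : Fin n → K) (k : Fin (n+1)) : Fin n → K :=
  fun j => x j ^ (n - k.val) * (1 + β * x j) ^ k.val

/-- `E k` : determinant of rows `arow` skipping index `k`. -/
noncomputable def Edet (β : K) (x : Fin n → K) (k : Fin (n+1)) : K :=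
  Matrix.det (Matrix.of fun i j => arow β x (k.succAbove i) j)

/-- Initial segment of `Fin n` determined by `k : Fin (n+1)`. -/
def seg (n : ℕ) (k : Fin (n+1)) : Finset (Fin n) := univ.filter fun i => i.castSucc < k

lemma mem_seg {k : Fin (n+1)} {i : Fin n} : i ∈ seg n k ↔ i.val < k.val := by
  simp [seg, Fin.lt_def]

lemma card_filter_lt (m : ℕ) (hm : m ≤ n) :
    (univ.filter fun i : Fin n => i.val < m).card = m := by
  have : (univ.filter fun i : Fin n => i.val < m) =
      Finset.map ⟨fun t : Fin m => ⟨t.val, lt_of_lt_of_le t.isLt hm⟩,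
        fun a b hab => by
          simpa [Fin.ext_iff] using hab⟩ univ := by
    ext i
    simp only [mem_filter, mem_univ, true_and, Finset.mem_map, Function.Embedding.coeFn_mk]
    constructor
    · intro h; exact ⟨⟨i.val, h⟩, rfl⟩
    · rintro ⟨t, -, rfl⟩; exact t.isLt
  rw [this, Finset.card_map, Finset.card_univ, Fintype.card_fin]

lemma card_seg (k : Fin (n+1)) : (seg n k).card = k.val := by
  have : seg n k = univ.filter fun i : Fin n => i.val < k.val := by
    ext i; simp [mem_seg]
  rw [this, card_filter_lt _ (by omega)]

lemma seg_injective : Function.Injective (seg n) := by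
  intro k k' h
  have := card_seg (n := n) k
  rw [h, card_seg] at this
  exact Fin.ext this.symm


lemma downclosed_eq_seg (s : Finset (Fin n))
    (h : ∀ (m : ℕ) (hm : m + 1 < n), (⟨m+1, hm⟩ : Fin n) ∈ s → (⟨m, by omega⟩ : Fin n) ∈ s) :
    ∃ k : Fin (n+1), s = seg n k := by
  have hdc : ∀ (i j : Fin n), j.val ≤ i.val → i ∈ s → j ∈ s := by
    intro i j hji hi
    obtain ⟨d, hd⟩ : ∃ d, i.val = j.val + d := ⟨i.val - j.val, by omega⟩
    clear hji
    induction d generalizing i with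
    | zero => have : j = i := Fin.ext (by omega); rwa [this]
    | succ d ih =>
      have hlt : (j.val + d) + 1 < n := by omega
      have : i = (⟨(j.val + d) + 1, hlt⟩ : Fin n) := Fin.ext (by simp; omega)
      rw [this] at hi
      exact ih ⟨j.val + d, by omega⟩ (h _ hlt hi) rfl
  have hcard : s.card ≤ n := by
    simpa using Finset.card_le_card (Finset.subset_univ s)
  refine ⟨⟨s.card, by omega⟩, ?_⟩
  ext i
  rw [mem_seg]
  show i ∈ s ↔ i.val < s.card
  constructor
  · intro hi
    have hsub : (univ.filter fun j : Fin n => j.val < i.val + 1) ⊆ s := by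
      intro j hj
      simp only [mem_filter, mem_univ, true_and] at hj
      exact hdc i j (by omega) hi
    have := Finset.card_le_card hsub
    rw [card_filter_lt (i.val + 1) i.isLt] at this
    omega
  · intro hi
    by_contra hns
    have hsub : s ⊆ univ.filter fun j : Fin n => j.val < i.val := by
      intro j hj
      simp only [mem_filter, mem_univ, true_and]
      by_contra hle
      exact hns (hdc j i (by omega) hj)
    have := Finset.card_le_card hsub
    rw [card_filter_lt i.val (by omega)] at this
    omega

/-- The master expansion lemma. -/
lemma master (β : K) (x : Fin n → K) (p q : Fin n → K) :
    Matrix.det (Matrix.of fun i j =>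
        p i * arow β x i.castSucc j + q i * arow β x i.succ j)
      = ∑ k : Fin (n+1),
          (∏ i : Fin n, if i.castSucc < k then p i else q i) * Edet β x k := by
  classical
  have hdet : Matrix.det (Matrix.of fun i j =>
        p i * arow β x i.castSucc j + q i * arow β x i.succ j)
      = Matrix.detRowAlternating
          ((fun i => p i • arow β x i.castSucc) + (fun i => q i • arow β x i.succ)) := rfl
  rw [hdet]
  rw [show (Matrix.detRowAlternating
          ((fun i : Fin n => p i • arow β x i.castSucc) + (fun i => q i • arow β x i.succ)) : K)
      = (Matrix.detRowAlternating : (Fin n → K) [⋀^Fin n]→ₗ[K] K).toMultilinearMap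
          ((fun i : Fin n => p i • arow β x i.castSucc) + (fun i => q i • arow β x i.succ)) from rfl,
    MultilinearMap.map_add_univ]
  have hterm : ∀ s : Finset (Fin n),
      (Matrix.detRowAlternating : (Fin n → K) [⋀^Fin n]→ₗ[K] K).toMultilinearMap
          (s.piecewise (fun i => p i • arow β x i.castSucc) (fun i => q i • arow β x i.succ))
        = (∏ i : Fin n, if i ∈ s then p i else q i) *
            Matrix.det (Matrix.of fun i j =>
              arow β x (if i ∈ s then i.castSucc else i.succ) j) := by
    intro s
    have hpw : s.piecewise (fun i => p i • arow β x i.castSucc)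
          (fun i => q i • arow β x i.succ)
        = fun i => (if i ∈ s then p i else q i) •
            arow β x (if i ∈ s then i.castSucc else i.succ) := by
      funext i
      by_cases h : i ∈ s <;> simp [Finset.piecewise, h]
    rw [hpw, MultilinearMap.map_smul_univ]
    rw [smul_eq_mul]
    rfl
  simp_rw [hterm]
  -- now reorganize the sum over subsets
  set F : Finset (Fin n) → K := fun s =>
    (∏ i : Fin n, if i ∈ s then p i else q i) *
      Matrix.det (Matrix.of fun i j =>
        arow β x (if i ∈ s then i.castSucc else i.succ) j) with hF
  have hzero : ∀ s ∈ (univ : Finset (Finset (Fin n))),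
      s ∉ univ.image (seg n) → F s = 0 := by
    intro s _ hs
    have hnotseg : ¬ ∃ k, s = seg n k := by
      rintro ⟨k, rfl⟩; exact hs (Finset.mem_image.2 ⟨k, mem_univ _, rfl⟩)
    -- there must exist an adjacent violating pair
    have hpair : ∃ (m : ℕ) (hm : m + 1 < n),
        (⟨m+1, hm⟩ : Fin n) ∈ s ∧ (⟨m, by omega⟩ : Fin n) ∉ s := by
      by_contra hc
      push_neg at hc
      exact hnotseg (downclosed_eq_seg s (fun m hm h1 => hc m hm h1))
    obtain ⟨m, hm, hin, hout⟩ := hpair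
    -- rows m and m+1 of the matrix coincide
    have hrows : (Matrix.of fun i j =>
          arow β x (if i ∈ s then i.castSucc else i.succ) j) (⟨m, by omega⟩ : Fin n)
        = (Matrix.of fun i j =>
          arow β x (if i ∈ s then i.castSucc else i.succ) j) (⟨m+1, hm⟩ : Fin n) := by
      funext j
      simp only [Matrix.of_apply, hin, hout, if_true, if_false]
      have heq : (⟨m, by omega⟩ : Fin n).succ = (⟨m+1, hm⟩ : Fin n).castSucc := by
        ext; simp
      rw [heq]
    have : Matrix.det (Matrix.of fun i j =>
          arow β x (if i ∈ s then i.castSucc else i.succ) j) = 0 :=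
      Matrix.det_zero_of_row_eq (i := (⟨m, by omega⟩ : Fin n)) (j := (⟨m+1, hm⟩ : Fin n))
        (by simp [Fin.ext_iff]) hrows
    rw [hF]
    simp [this]
  rw [← Finset.sum_subset (Finset.subset_univ (univ.image (seg n))) hzero]
  rw [Finset.sum_image (fun k _ k' _ h => seg_injective h)]
  apply Finset.sum_congr rfl
  intro k _
  rw [hF]
  dsimp only
  have hmem : ∀ i : Fin n, i ∈ seg n k ↔ i.castSucc < k := by
    intro i; simp [seg]
  have h2 : ∀ i : Fin n, (if i ∈ seg n k then i.castSucc else i.succ) = k.succAbove i := by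
    intro i
    by_cases h : i.castSucc < k
    · rw [if_pos ((hmem i).2 h), Fin.succAbove_of_castSucc_lt _ _ h]
    · rw [if_neg (fun hh => h ((hmem i).1 hh)), Fin.succAbove_of_le_castSucc _ _ (not_lt.1 h)]
  have h1' : (∏ i : Fin n, if i ∈ seg n k then p i else q i)
      = ∏ i : Fin n, if i.castSucc < k then p i else q i := by
    apply Finset.prod_congr rfl
    intro i _
    by_cases h : i.castSucc < k
    · rw [if_pos ((hmem i).2 h), if_pos h]
    · rw [if_neg (fun hh => h ((hmem i).1 hh)), if_neg h]
  have h2' : (Matrix.of fun i j => arow β x (if i ∈ seg n k then i.castSucc else i.succ) j)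
      = Matrix.of fun i j => arow β x (k.succAbove i) j := by
    ext i j
    rw [Matrix.of_apply, Matrix.of_apply, h2 i]
  rw [h1', h2']
  rfl


lemma prod_ite_pow (k : Fin (n+1)) (c d : K) :
    (∏ i : Fin n, if i.castSucc < k then c else d) = c ^ k.val * d ^ (n - k.val) := by
  rw [Finset.prod_ite, Finset.prod_const, Finset.prod_const]
  have h1 : (univ.filter fun i : Fin n => i.castSucc < k).card = k.val := card_seg k
  have h2 : (univ.filter fun i : Fin n => ¬ i.castSucc < k).card = n - k.val := by
    have := Finset.card_filter_add_card_filter_not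
      (s := (univ : Finset (Fin n))) (p := fun i : Fin n => i.castSucc < k)
    rw [h1, Finset.card_univ, Fintype.card_fin] at this
    omega
  rw [h1, h2]

lemma card_filter_Ico (a b : ℕ) (hb : b ≤ n) :
    (univ.filter fun i : Fin n => a ≤ i.val ∧ i.val < b).card = b - a := by
  have : (univ.filter fun i : Fin n => a ≤ i.val ∧ i.val < b) =
      Finset.map ⟨fun t : Fin (b - a) => (⟨a + t.val, by omega⟩ : Fin n),
        fun s t hst => by simpa [Fin.ext_iff] using hst⟩ univ := by
    ext i
    simp only [mem_filter, mem_univ, true_and, Finset.mem_map, Function.Embedding.coeFn_mk]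
    constructor
    · intro h
      refine ⟨⟨i.val - a, by omega⟩, ?_⟩
      ext; show a + (i.val - a) = i.val; omega
    · rintro ⟨t, rfl⟩; have := t.isLt; show a ≤ a + t.val ∧ a + t.val < b; omega
  rw [this, Finset.card_map, Finset.card_univ, Fintype.card_fin]

lemma hcastlt (k : Fin (n+1)) (i : Fin n) : i.castSucc < k ↔ i.val < k.val := by
  rw [Fin.lt_def]; rfl

/-- Expansion of the Vandermonde-with-factors determinant. -/
lemma detB (β : K) (x : Fin n → K) :
    Matrix.det (Matrix.of fun i j : Fin n => x j ^ (n - 1 - i.val) * (1 + β * x j) ^ i.val)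
      = ∑ k : Fin (n+1), (-β) ^ k.val * Edet β x k := by
  have hrow : (Matrix.of fun i j : Fin n => x j ^ (n - 1 - i.val) * (1 + β * x j) ^ i.val)
      = Matrix.of fun i j => (-β) * arow β x i.castSucc j + 1 * arow β x i.succ j := by
    ext i j
    have hi := i.isLt
    have h1 : n - i.val = (n - 1 - i.val) + 1 := by omega
    have h2 : n - (i.val + 1) = n - 1 - i.val := by omega
    simp only [Matrix.of_apply, arow, Fin.coe_castSucc, Fin.val_succ, h1, h2, pow_succ]
    ring
  rw [hrow, master]
  apply Finset.sum_congr rfl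
  intro k _
  rw [prod_ite_pow, one_pow, mul_one]

/-- Expansion of the numerator of the generating function. -/
lemma detC (β u : K) (x : Fin n → K) :
    Matrix.det (Matrix.of fun i j : Fin n =>
        (u + x j + β * u * x j) * (x j ^ (n - 1 - i.val) * (1 + β * x j) ^ i.val))
      = ∑ k : Fin (n+1), u ^ (n - k.val) * Edet β x k := by
  have hrow : (Matrix.of fun i j : Fin n =>
        (u + x j + β * u * x j) * (x j ^ (n - 1 - i.val) * (1 + β * x j) ^ i.val))
      = Matrix.of fun i j => 1 * arow β x i.castSucc j + u * arow β x i.succ j := by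
    ext i j
    have hi := i.isLt
    have h1 : n - i.val = (n - 1 - i.val) + 1 := by omega
    have h2 : n - (i.val + 1) = n - 1 - i.val := by omega
    simp only [Matrix.of_apply, arow, Fin.coe_castSucc, Fin.val_succ, h1, h2, pow_succ]
    ring
  rw [hrow, master]
  apply Finset.sum_congr rfl
  intro k _
  rw [prod_ite_pow, one_pow, one_mul]

/-- Expansion of the numerator of `grothDet5` for a column shape. -/
lemma detD (β : K) (x : Fin n → K) (r : ℕ) (hr1 : 1 ≤ r) (hrn : r ≤ n) :
    Matrix.det (Matrix.of fun i j : Fin n =>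
        x j ^ ((if i.val < r then 1 else 0) + (n - 1 - i.val)) * (1 + β * x j) ^ i.val)
      = ∑ k : Fin (n+1), (if r ≤ k.val then (-β) ^ (k.val - r) else 0) * Edet β x k := by
  have hrow : (Matrix.of fun i j : Fin n =>
        x j ^ ((if i.val < r then 1 else 0) + (n - 1 - i.val)) * (1 + β * x j) ^ i.val)
      = Matrix.of fun i j => (if i.val < r then 1 else -β) * arow β x i.castSucc j
          + (if i.val < r then 0 else 1) * arow β x i.succ j := by
    ext i j
    have hi := i.isLt
    by_cases h : i.val < r
    · have h1 : 1 + (n - 1 - i.val) = n - i.val := by omega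
      simp only [Matrix.of_apply, h, if_true, arow, Fin.coe_castSucc, h1]
      ring
    · have h1 : (0 : ℕ) + (n - 1 - i.val) = n - 1 - i.val := by omega
      have h2 : n - i.val = (n - 1 - i.val) + 1 := by omega
      have h3 : n - (i.val + 1) = n - 1 - i.val := by omega
      simp only [Matrix.of_apply, h, if_false, arow, Fin.coe_castSucc, Fin.val_succ,
        h1, h2, h3, pow_succ]
      ring
  rw [hrow, master]
  apply Finset.sum_congr rfl
  intro k _
  congr 1
  by_cases hk : r ≤ k.val
  · rw [if_pos hk]
    have hco : ∀ i : Fin n,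
        (if i.castSucc < k then (if i.val < r then (1:K) else -β)
          else (if i.val < r then (0:K) else 1))
        = if r ≤ i.val ∧ i.val < k.val then -β else 1 := by
      intro i
      by_cases h1 : i.val < r
      · rw [if_pos ((hcastlt k i).2 (by omega)), if_pos h1, if_neg (by omega)]
      · by_cases h2 : i.val < k.val
        · rw [if_pos ((hcastlt k i).2 h2), if_neg h1, if_pos (by omega)]
        · rw [if_neg (fun hh => h2 ((hcastlt k i).1 hh)), if_neg h1, if_neg (by omega)]
    calc (∏ i : Fin n, if i.castSucc < k then (if i.val < r then (1:K) else -β)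
          else (if i.val < r then (0:K) else 1))
        = ∏ i : Fin n, (if r ≤ i.val ∧ i.val < k.val then -β else 1) :=
          Finset.prod_congr rfl (fun i _ => hco i)
      _ = (-β) ^ (k.val - r) := by
          rw [Finset.prod_ite, Finset.prod_const, Finset.prod_const, one_pow, mul_one]
          rw [card_filter_Ico r k.val (by omega)]
  · rw [if_neg hk]
    push_neg at hk
    apply Finset.prod_eq_zero (Finset.mem_univ (⟨k.val, by omega⟩ : Fin n))
    have hnc : ¬ ((⟨k.val, by omega⟩ : Fin n).castSucc < k) := by
      rw [hcastlt]; simp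
    rw [if_neg hnc, if_pos (by simpa using hk)]


/-- The factors `(1+βx)^i` do not change the Vandermonde-type determinant. -/
lemma detB_eq_vandermonde (β : K) (x : Fin n → K) :
    Matrix.det (Matrix.of fun i j : Fin n => x j ^ (n - 1 - i.val) * (1 + β * x j) ^ i.val)
      = Matrix.det (Matrix.of fun i j : Fin n => x j ^ (n - 1 - i.val)) := by
  classical
  set L : Matrix (Fin n) (Fin n) K := Matrix.of fun i t : Fin n =>
    if t.val ≤ i.val then (i.val.choose t.val : K) * β ^ (i.val - t.val) else 0 with hLdef
  have hLW : (Matrix.of fun i j : Fin n => x j ^ (n - 1 - i.val) * (1 + β * x j) ^ i.val)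
      = L * Matrix.of (fun i j : Fin n => x j ^ (n - 1 - i.val)) := by
    ext i j
    rw [Matrix.mul_apply]
    have hi := i.isLt
    have hexp : x j ^ (n - 1 - i.val) * (1 + β * x j) ^ i.val
        = ∑ kk ∈ Finset.range (i.val + 1),
            (i.val.choose kk : K) * β ^ (i.val - kk) * x j ^ (n - 1 - kk) := by
      rw [add_pow, Finset.mul_sum]
      apply Finset.sum_congr rfl
      intro kk hkk
      rw [Finset.mem_range] at hkk
      have h1 : n - 1 - i.val + (i.val - kk) = n - 1 - kk := by omega
      calc x j ^ (n - 1 - i.val) * ((1:K) ^ kk * (β * x j) ^ (i.val - kk) * (i.val.choose kk : K))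
          = (i.val.choose kk : K) * β ^ (i.val - kk)
              * (x j ^ (n - 1 - i.val) * x j ^ (i.val - kk)) := by
            rw [one_pow, mul_pow]; ring
        _ = _ := by rw [← pow_add, h1]
    rw [Matrix.of_apply, hexp]
    have hfin := Fin.sum_univ_eq_sum_range
      (fun kk => (if kk ≤ i.val then (i.val.choose kk : K) * β ^ (i.val - kk) else 0)
        * x j ^ (n - 1 - kk)) n
    have hsum : ∑ t : Fin n, L i t * (Matrix.of fun i j : Fin n => x j ^ (n - 1 - i.val)) t j
        = ∑ kk ∈ Finset.range n,
            (if kk ≤ i.val then (i.val.choose kk : K) * β ^ (i.val - kk) else 0)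
              * x j ^ (n - 1 - kk) := by
      rw [← hfin]
      rfl
    rw [hsum]
    simp only [ite_mul, zero_mul]
    rw [← Finset.sum_filter]
    have hff : (Finset.range n).filter (fun kk => kk ≤ i.val) = Finset.range (i.val + 1) := by
      ext a
      simp only [Finset.mem_filter, Finset.mem_range]
      omega
    rw [hff]
  have hL : L.det = 1 := by
    have hbt : L.BlockTriangular OrderDual.toDual := by
      intro a b hab
      simp only [OrderDual.toDual_lt_toDual] at hab
      have : ¬ b.val ≤ a.val := by
        rw [Fin.lt_def] at hab
        omega
      simp only [hLdef, Matrix.of_apply, this, if_false]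
    rw [Matrix.det_of_lowerTriangular L hbt]
    apply Finset.prod_eq_one
    intro i _
    simp [hLdef]
  rw [hLW, Matrix.det_mul, hL, one_mul]

/-- The Vandermonde-type determinant is nonzero for distinct values. -/
lemma vand_ne (x : Fin n → K) (hx : ∀ i j, i ≠ j → x i ≠ x j) :
    Matrix.det (Matrix.of fun i j : Fin n => x j ^ (n - 1 - i.val)) ≠ 0 := by
  have hM : (Matrix.of fun i j : Fin n => x j ^ (n - 1 - i.val))
      = ((Matrix.vandermonde x).transpose).submatrix (Fin.revPerm : Equiv.Perm (Fin n)) id := by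
    ext i j
    simp only [Matrix.of_apply, Matrix.submatrix_apply, Matrix.transpose_apply,
      Matrix.vandermonde_apply, id_eq, Fin.revPerm_apply, Fin.val_rev]
    congr 1
    have := i.isLt
    omega
  rw [hM, Matrix.det_permute]
  have hvd : ((Matrix.vandermonde x).transpose).det ≠ 0 := by
    rw [Matrix.det_transpose]
    rw [Matrix.det_vandermonde_ne_zero_iff]
    intro a b hab
    by_contra hne
    exact hx a b hne hab
  have hsgn := Int.units_eq_one_or (Equiv.Perm.sign (Fin.revPerm : Equiv.Perm (Fin n)))
  rcases hsgn with h | h <;> rw [h] <;> simpa using hvd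

/-- The scalar telescoping identity. -/
lemma coeff_id (β u : K) {n m : ℕ} (h : m ≤ n) :
    u ^ (n - m) = u ^ n * (-β) ^ m
      + (1 + β * u) * ∑ r ∈ Finset.Icc 1 m, u ^ (n - r) * (-β) ^ (m - r) := by
  induction m with
  | zero => simp
  | succ m ih =>
    have hm : m ≤ n := by omega
    have ih' := ih hm
    rw [Finset.sum_Icc_succ_top (by omega : 1 ≤ m + 1)]
    have hs : ∑ r ∈ Finset.Icc 1 m, u ^ (n - r) * (-β) ^ (m + 1 - r)
        = (-β) * ∑ r ∈ Finset.Icc 1 m, u ^ (n - r) * (-β) ^ (m - r) := by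
      rw [Finset.mul_sum]
      apply Finset.sum_congr rfl
      intro r hr
      rw [Finset.mem_Icc] at hr
      have h1 : m + 1 - r = (m - r) + 1 := by omega
      rw [h1, pow_succ]
      ring
    rw [hs]
    have hpow : u ^ (n - m) = u * u ^ (n - (m + 1)) := by
      rw [← pow_succ']
      congr 1
      omega
    have h2 : m + 1 - (m + 1) = 0 := by omega
    rw [h2, pow_zero, mul_one]
    linear_combination (-β) * ih' + β * hpow

end ColGroth

/-- Generating identity `∏_{i=1}^n (u ⊕ x_i) = u^n + (1+βu) Σ_{r=1}^n u^{n-r} G_{1^r}(x)`,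
where `u ⊕ x = u + x + β u x`. -/
theorem column_grothendieck_generating_function {K : Type*} [Field K] (n : ℕ) (β u : K)
    (x : Fin n → K) (hx : ∀ i j, i ≠ j → x i ≠ x j) :
    (∏ i : Fin n, (u + x i + β * u * x i))
      = u ^ n + (1 + β * u) * ∑ r ∈ Finset.Icc 1 n,
          u ^ (n - r) * grothDet5 β x (fun i => if i.val < r then 1 else 0) := by
  classical
  have hV : Matrix.det (Matrix.of fun i j : Fin n => x j ^ (n - 1 - i.val)) ≠ 0 :=
    ColGroth.vand_ne x hx
  set V : K := Matrix.det (Matrix.of fun i j : Fin n => x j ^ (n - 1 - i.val)) with hVdef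
  apply mul_right_cancel₀ hV
  have hL : (∏ i : Fin n, (u + x i + β * u * x i)) * V
      = ∑ k : Fin (n+1), u ^ (n - k.val) * ColGroth.Edet β x k := by
    rw [hVdef, ← ColGroth.detB_eq_vandermonde β x, ← ColGroth.detC β u x]
    rw [← Matrix.det_mul_row (fun j => u + x j + β * u * x j)]
    rfl
  have hWE : V = ∑ k : Fin (n+1), (-β) ^ k.val * ColGroth.Edet β x k := by
    rw [hVdef, ← ColGroth.detB_eq_vandermonde β x]
    exact ColGroth.detB β x
  have hD : ∀ r ∈ Finset.Icc 1 n, grothDet5 β x (fun i => if i.val < r then 1 else 0) * V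
      = ∑ k : Fin (n+1), (if r ≤ k.val then (-β) ^ (k.val - r) else 0) * ColGroth.Edet β x k := by
    intro r hr
    rw [Finset.mem_Icc] at hr
    rw [grothDet5, hVdef, div_mul_cancel₀ _ hV]
    exact ColGroth.detD β x r hr.1 hr.2
  rw [hL, add_mul, mul_assoc, Finset.sum_mul]
  have hterm : ∀ r ∈ Finset.Icc 1 n,
      (u ^ (n - r) * grothDet5 β x (fun i => if i.val < r then 1 else 0)) * V
        = u ^ (n - r) * ∑ k : Fin (n+1),
            (if r ≤ k.val then (-β) ^ (k.val - r) else 0) * ColGroth.Edet β x k := by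
    intro r hr
    rw [mul_assoc, hD r hr]
  rw [Finset.sum_congr rfl hterm, hWE]
  have hswap : ∑ r ∈ Finset.Icc 1 n, u ^ (n - r) * (∑ k : Fin (n+1),
        (if r ≤ k.val then (-β) ^ (k.val - r) else 0) * ColGroth.Edet β x k)
      = ∑ k : Fin (n+1), (∑ r ∈ Finset.Icc 1 n,
          u ^ (n - r) * (if r ≤ k.val then (-β) ^ (k.val - r) else 0)) * ColGroth.Edet β x k := by
    simp_rw [Finset.mul_sum, Finset.sum_mul, mul_assoc]
    exact Finset.sum_comm
  rw [hswap, Finset.mul_sum, Finset.mul_sum, ← Finset.sum_add_distrib]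
  apply Finset.sum_congr rfl
  intro k _
  have hk : k.val ≤ n := by
    have := k.isLt
    omega
  have hinner : ∑ r ∈ Finset.Icc 1 n,
        u ^ (n - r) * (if r ≤ k.val then (-β) ^ (k.val - r) else 0)
      = ∑ r ∈ Finset.Icc 1 k.val, u ^ (n - r) * (-β) ^ (k.val - r) := by
    simp_rw [mul_ite, mul_zero]
    rw [← Finset.sum_filter]
    congr 1
    ext a
    simp only [Finset.mem_filter, Finset.mem_Icc]
    omega
  rw [hinner, ColGroth.coeff_id β u hk]
  ring
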